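/- For all t, l ∈ ℂ, the operators E_t = t(-∂_z + 1/(2z)) - l/(2z), F_t = t(z²∂_z + z/2) - (l/2)z, H_t = -2z∂_z on ℂ[z,z⁻¹] satisfy the contracted commutation relations [H_t,E_t] = 2E_t, [H_t,F_t] = -2F_t, [E_t,F_t] = t²H_t. -/

import Mathlib

/-- Operator on Laurent polynomials (basis `z^n`, encoded as `ℤ →₀ ℂ`) sending
`z^p` to `a p • z^(p+s)`. -/
noncomputable def sop (a : ℤ → ℂ) (s : ℤ) : Module.End ℂ (ℤ →₀ ℂ) :=
  Finsupp.lsum ℂ fun p => a p • Finsupp.lsingle (p + s)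

/-- `E_t = t(-∂_z + 1/(2z)) - l/(2z)` : `z^n ↦ (t(-n + 1/2) - l/2) z^(n-1)`. -/
noncomputable def Et (t l : ℂ) : Module.End ℂ (ℤ →₀ ℂ) :=
  sop (fun n => t * (-(n : ℂ) + 1 / 2) - l / 2) (-1)
/-- `F_t = t(z² ∂_z + z/2) - (l/2) z` : `z^n ↦ (t(n + 1/2) - l/2) z^(n+1)`. -/
noncomputable def Ft (t l : ℂ) : Module.End ℂ (ℤ →₀ ℂ) :=
  sop (fun n => t * ((n : ℂ) + 1 / 2) - l / 2) 1
/-- `H_t = -2 z ∂_z`. -/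
noncomputable def Ht : Module.End ℂ (ℤ →₀ ℂ) := sop (fun n => -2 * (n : ℂ)) 0

/-! Weighted shifts `sop a s` compose to weighted shifts, so each relation reduces to a
polynomial identity in `p` between the weights. -/

lemma sop_single (a : ℤ → ℂ) (s p : ℤ) (c : ℂ) :
    sop a s (Finsupp.single p c) = Finsupp.single (p + s) (a p * c) := by
  rw [sop, Finsupp.lsum_single, LinearMap.smul_apply, Finsupp.lsingle_apply,
    Finsupp.smul_single, smul_eq_mul]

lemma sop_mul_sop (a b : ℤ → ℂ) (s r : ℤ) :
    sop a s * sop b r = sop (fun p => a (p + r) * b p) (r + s) := by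
  refine Finsupp.lhom_ext fun p c => ?_
  simp only [Module.End.mul_apply, sop_single, mul_assoc, add_assoc]

lemma sop_sub_sop (a b : ℤ → ℂ) (s : ℤ) :
    sop a s - sop b s = sop (fun p => a p - b p) s := by
  refine Finsupp.lhom_ext fun p c => ?_
  simp only [LinearMap.sub_apply, sop_single, sub_mul, Finsupp.single_sub]

lemma smul_sop (c : ℂ) (a : ℤ → ℂ) (s : ℤ) : c • sop a s = sop (fun p => c * a p) s := by
  refine Finsupp.lhom_ext fun p d => ?_
  simp only [LinearMap.smul_apply, sop_single, Finsupp.smul_single, smul_eq_mul, mul_assoc]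

lemma sop_commutator (a b : ℤ → ℂ) (s r : ℤ) :
    sop a s * sop b r - sop b r * sop a s =
      sop (fun p => a (p + r) * b p - b (p + s) * a p) (s + r) := by
  rw [sop_mul_sop, sop_mul_sop, add_comm r s, sop_sub_sop]

theorem contracted_twisted_relations (t l : ℂ) :
    Ht * Et t l - Et t l * Ht = (2 : ℂ) • Et t l ∧
    Ht * Ft t l - Ft t l * Ht = (-2 : ℂ) • Ft t l ∧
    Et t l * Ft t l - Ft t l * Et t l = t ^ 2 • Ht := by
  refine ⟨?_, ?_, ?_⟩ <;>
  · simp only [Et, Ft, Ht, sop_commutator, smul_sop]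
    congr 1
    funext p
    push_cast
    ring
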